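/- arXiv:1202.3917 — 4 statements merged into one kernel-verified Lean document; each statement's English description precedes it below -/
import Mathlib

section
/- Let V be a finite-dimensional vector space with subspaces (V_i)_{i∈I} indexed by a finite set, and a weight χ: I → ℕ and χ₀ ∈ ℕ. Call (V; V_i) χ-stable if ∑ χ_i dim V_i = χ₀ dim V and for every proper nonzero subspace K ⊆ V one has (1/dim K)·∑ χ_i dim(V_i ∩ K) < (1/dim V)·∑ χ_i dim V_i. Then any χ-stable system is Schurian: every linear endomorphism f: V → V with f(V_i) ⊆ V_i for all i is a scalar multiple of the identity. -/
open Module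

/-!
An endomorphism `f` preserving every `Vᵢ` has an eigenvalue `c`; put `g = f - c`, which
still preserves every `Vᵢ`. Restricting `g` to `Vᵢ` and using rank–nullity gives
`dim Vᵢ ≤ dim (Vᵢ ∩ ker g) + dim (Vᵢ ∩ im g)`, so the weighted dimension of `V` is at most
the sum of those of `ker g` and `im g`. If `g ≠ 0`, both are proper nonzero subspaces with
`dim ker g + dim im g = dim V`, and stability makes the sum strictly smaller than the
weighted dimension of `V`, a contradiction. Hence `g = 0`, i.e. `f = c • id`.
-/

section Stability

variable {K V I : Type*} [DivisionRing K] [AddCommGroup V] [Module K V] [Fintype I]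

def IsSlopeStable (Vs : I → Submodule K V) (χ : I → ℕ) : Prop :=
  ∀ W : Submodule K V, W ≠ ⊥ → W ≠ ⊤ →
    (1 / (finrank K W : ℝ)) * ∑ i, (χ i : ℝ) * finrank K (Vs i ⊓ W : Submodule K V)
      < (1 / (finrank K V : ℝ)) * ∑ i, (χ i : ℝ) * finrank K (Vs i)

theorem Submodule.map_sub_smul_id_le {R M : Type*} [CommRing R] [AddCommGroup M] [Module R M]
    {f : M →ₗ[R] M} {W : Submodule R M} (c : R) (hW : W.map f ≤ W) :
    W.map (f - c • LinearMap.id) ≤ W := by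
  rintro _ ⟨x, hx, rfl⟩
  exact W.sub_mem (hW ⟨x, hx, rfl⟩) (W.smul_mem c hx)

variable [FiniteDimensional K V]

theorem finrank_le_finrank_inf_ker_add_finrank_inf_range {g : V →ₗ[K] V} {W : Submodule K V}
    (hW : W.map g ≤ W) :
    finrank K W ≤ finrank K (W ⊓ LinearMap.ker g : Submodule K V)
      + finrank K (W ⊓ LinearMap.range g : Submodule K V) := by
  have hrank := LinearMap.finrank_range_add_finrank_ker (g.domRestrict W)
  rw [LinearMap.range_domRestrict, LinearMap.ker_domRestrict] at hrank
  have hker : finrank K ((LinearMap.ker g).comap W.subtype) =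
      finrank K (W ⊓ LinearMap.ker g : Submodule K V) := by
    rw [← Submodule.finrank_map_subtype_eq W, Submodule.map_comap_subtype]
  have hrange : finrank K (W.map g) ≤ finrank K (W ⊓ LinearMap.range g : Submodule K V) :=
    Submodule.finrank_mono (le_inf hW LinearMap.map_le_range)
  omega

theorem sum_mul_finrank_le_of_map_le (Vs : I → Submodule K V) (χ : I → ℕ) {g : V →ₗ[K] V}
    (hg : ∀ i, (Vs i).map g ≤ Vs i) :
    ∑ i, χ i * finrank K (Vs i) ≤
      ∑ i, χ i * finrank K (Vs i ⊓ LinearMap.ker g : Submodule K V)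
        + ∑ i, χ i * finrank K (Vs i ⊓ LinearMap.range g : Submodule K V) := by
  rw [← Finset.sum_add_distrib]
  gcongr with i
  rw [← mul_add]
  exact Nat.mul_le_mul_left _ (finrank_le_finrank_inf_ker_add_finrank_inf_range (hg i))

theorem add_lt_of_one_div_mul_lt {a b x y s : ℝ} (ha : 0 < a) (hb : 0 < b)
    (hx : 1 / a * x < 1 / (a + b) * s) (hy : 1 / b * y < 1 / (a + b) * s) : x + y < s := by
  rw [one_div, inv_mul_lt_iff₀ ha] at hx
  rw [one_div, inv_mul_lt_iff₀ hb] at hy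
  calc x + y < a * (1 / (a + b) * s) + b * (1 / (a + b) * s) := add_lt_add hx hy
    _ = s := by field_simp

theorem IsSlopeStable.eq_zero_of_ker_ne_bot {Vs : I → Submodule K V} {χ : I → ℕ}
    (hstab : IsSlopeStable Vs χ) {g : V →ₗ[K] V} (hg : ∀ i, (Vs i).map g ≤ Vs i)
    (hker : LinearMap.ker g ≠ ⊥) : g = 0 := by
  by_contra hg0
  have hker_top : LinearMap.ker g ≠ ⊤ := LinearMap.ker_eq_top.not.mpr hg0
  have hrange : LinearMap.range g ≠ ⊥ := LinearMap.range_eq_bot.not.mpr hg0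
  have hrange_top : LinearMap.range g ≠ ⊤ := fun h ↦
    hker (LinearMap.ker_eq_bot.mpr
      (LinearMap.injective_iff_surjective.mpr (LinearMap.range_eq_top.mp h)))
  have hdim_ker : 0 < finrank K (LinearMap.ker g) :=
    Nat.pos_of_ne_zero (Submodule.finrank_eq_zero.not.mpr hker)
  have hdim_range : 0 < finrank K (LinearMap.range g) :=
    Nat.pos_of_ne_zero (Submodule.finrank_eq_zero.not.mpr hrange)
  have hdim : (finrank K V : ℝ) = finrank K (LinearMap.ker g) + finrank K (LinearMap.range g) := by
    exact_mod_cast ((add_comm _ _).trans (LinearMap.finrank_range_add_finrank_ker g)).symm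
  have hsum := hstab _ hker hker_top
  have hsum' := hstab _ hrange hrange_top
  rw [hdim] at hsum hsum'
  have hlt := add_lt_of_one_div_mul_lt (by exact_mod_cast hdim_ker)
    (by exact_mod_cast hdim_range) hsum hsum'
  have hle := sum_mul_finrank_le_of_map_le Vs χ hg
  exact hlt.not_ge (by exact_mod_cast hle)

end Stability

theorem stmt_8_general {V : Type*} [AddCommGroup V] [Module ℂ V] [FiniteDimensional ℂ V]
    {I : Type*} [Fintype I]
    (Vs : I → Submodule ℂ V) (χ : I → ℕ)
    (hstab : ∀ K : Submodule ℂ V, K ≠ ⊥ → K ≠ ⊤ →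
      (1 / (finrank ℂ K : ℝ)) * ∑ i, (χ i : ℝ) * finrank ℂ (Vs i ⊓ K : Submodule ℂ V)
        < (1 / (finrank ℂ V : ℝ)) * ∑ i, (χ i : ℝ) * finrank ℂ (Vs i)) :
    ∀ f : V →ₗ[ℂ] V, (∀ i, (Vs i).map f ≤ Vs i) →
      ∃ c : ℂ, f = c • (LinearMap.id : V →ₗ[ℂ] V) := by
  intro f hf
  cases subsingleton_or_nontrivial V
  · exact ⟨0, Subsingleton.elim _ _⟩
  obtain ⟨c, hc⟩ := Module.End.exists_eigenvalue f
  refine ⟨c, sub_eq_zero.mp (IsSlopeStable.eq_zero_of_ker_ne_bot (Vs := Vs) (χ := χ) hstab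
    (fun i ↦ Submodule.map_sub_smul_id_le c (hf i)) ?_)⟩
  exact Module.End.eigenspace_def (f := f) ▸ Module.End.hasEigenvalue_iff.mp hc

/-- A `χ`-stable system of subspaces is Schurian: every endomorphism preserving all the
subspaces is a scalar multiple of the identity. -/
theorem stmt_8 {V : Type*} [AddCommGroup V] [Module ℂ V] [FiniteDimensional ℂ V]
    {I : Type*} [Fintype I]
    (Vs : I → Submodule ℂ V) (χ : I → ℕ) (χ₀ : ℕ)
    (htr : ∑ i, χ i * finrank ℂ (Vs i) = χ₀ * finrank ℂ V)
    (hstab : ∀ K : Submodule ℂ V, K ≠ ⊥ → K ≠ ⊤ →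
      (1 / (finrank ℂ K : ℝ)) * ∑ i, (χ i : ℝ) * finrank ℂ (Vs i ⊓ K : Submodule ℂ V)
        < (1 / (finrank ℂ V : ℝ)) * ∑ i, (χ i : ℝ) * finrank ℂ (Vs i)) :
    ∀ f : V →ₗ[ℂ] V, (∀ i, (Vs i).map f ≤ Vs i) →
      ∃ c : ℂ, f = c • (LinearMap.id : V →ₗ[ℂ] V) :=
  stmt_8_general Vs χ hstab
end

section
/- Let f: V → W be an isomorphism between two χ-stable systems (V; V_i) and (W; W_i) over ℂ (i.e., f linear bijective with f(V_i) = W_i for all i). Then any other morphism g: V → W with g(V_i) ⊆ W_i is a scalar multiple of f. -/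
/-!
An endomorphism `h` of a stable system that preserves every `Vᵢ` has its kernel and its image
as invariant subspaces, and rank–nullity applied inside each `Vᵢ` shows that the weighted
dimensions of `ker h` and `im h` add up to at least that of `V`. If both were proper and nonzero,
stability would make each of their slopes smaller than that of `V`, which is impossible since
their dimensions also add up to `dim V`. So every such endomorphism is zero or injective; applied
to `h - c` for an eigenvalue `c`, this forces `h = c`. For a morphism `g` and an isomorphism `f`,
take `h = f⁻¹ ∘ g`.
-/

open Module

section RankNullity

variable {k V : Type*} [DivisionRing k] [AddCommGroup V] [Module k V] [FiniteDimensional k V]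

theorem Submodule.finrank_map_add_finrank_inf_ker {W : Type*} [AddCommGroup W] [Module k W]
    (φ : V →ₗ[k] W) (p : Submodule k V) :
    finrank k (p.map φ) + finrank k (p ⊓ LinearMap.ker φ : Submodule k V) = finrank k p := by
  have h := LinearMap.finrank_range_add_finrank_ker (φ.domRestrict p)
  rw [LinearMap.range_domRestrict, LinearMap.ker_domRestrict] at h
  rwa [← (Submodule.comapSubtypeEquivOfLe
      (inf_le_left : p ⊓ LinearMap.ker φ ≤ p)).finrank_eq, Submodule.comap_inf, Submodule.comap_subtype_self, top_inf_eq]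

theorem Submodule.finrank_le_finrank_inf_range_add_finrank_inf_ker {p : Submodule k V}
    {φ : Module.End k V} (hφ : p.map φ ≤ p) :
    finrank k p ≤ finrank k (p ⊓ LinearMap.range φ : Submodule k V)
      + finrank k (p ⊓ LinearMap.ker φ : Submodule k V) := by
  rw [← p.finrank_map_add_finrank_inf_ker φ]
  exact Nat.add_le_add_right (Submodule.finrank_mono (le_inf hφ LinearMap.map_le_range)) _

end RankNullity

section StableSystem

variable {k V I : Type*} [DivisionRing k] [AddCommGroup V] [Module k V] [Fintype I]

def IsStableSystem (Vs : I → Submodule k V) (χ : I → ℝ) : Prop :=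
  ∀ K : Submodule k V, K ≠ ⊥ → K ≠ ⊤ →
    (1 / (finrank k K : ℝ)) * ∑ i, χ i * finrank k (Vs i ⊓ K : Submodule k V)
      < (1 / (finrank k V : ℝ)) * ∑ i, χ i * finrank k (Vs i)

variable [FiniteDimensional k V] {Vs : I → Submodule k V} {χ : I → ℝ}

theorem IsStableSystem.mul_lt_mul (hs : IsStableSystem Vs χ) {K : Submodule k V}
    (hbot : K ≠ ⊥) (htop : K ≠ ⊤) :
    (∑ i, χ i * finrank k (Vs i ⊓ K : Submodule k V)) * finrank k V
      < (∑ i, χ i * finrank k (Vs i)) * finrank k K := by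
  have hK : 0 < finrank k K := Nat.pos_of_ne_zero (mt Submodule.finrank_eq_zero.mp hbot)
  have hV : 0 < finrank k V := hK.trans_le K.finrank_le
  have h := hs K hbot htop
  rw [one_div_mul_eq_div, one_div_mul_eq_div] at h
  exact (div_lt_div_iff₀ (by exact_mod_cast hK) (by exact_mod_cast hV)).mp h

theorem IsStableSystem.ker_eq_bot_or_eq_top (hs : IsStableSystem Vs χ) (hχ : 0 ≤ χ)
    {φ : Module.End k V} (hφ : ∀ i, (Vs i).map φ ≤ Vs i) :
    LinearMap.ker φ = ⊥ ∨ LinearMap.ker φ = ⊤ := by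
  by_contra! ⟨hKbot, hKtop⟩
  have hrank := LinearMap.finrank_range_add_finrank_ker φ
  have hJbot : LinearMap.range φ ≠ ⊥ := fun h =>
    hKtop (LinearMap.range_eq_bot.mp h ▸ LinearMap.ker_zero)
  have hJtop : LinearMap.range φ ≠ ⊤ := by
    intro h
    rw [h, finrank_top] at hrank
    exact hKbot (Submodule.finrank_eq_zero.mp (by omega))
  have hsplit : ∑ i, χ i * finrank k (Vs i)
      ≤ ∑ i, χ i * finrank k (Vs i ⊓ LinearMap.range φ : Submodule k V)
        + ∑ i, χ i * finrank k (Vs i ⊓ LinearMap.ker φ : Submodule k V) := by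
    rw [← Finset.sum_add_distrib]
    gcongr with i
    rw [← mul_add]
    gcongr
    · exact hχ i
    · exact_mod_cast (Vs i).finrank_le_finrank_inf_range_add_finrank_inf_ker (hφ i)
  have hK := hs.mul_lt_mul hKbot hKtop
  have hJ := hs.mul_lt_mul hJbot hJtop
  have hV : (0 : ℝ) ≤ finrank k V := Nat.cast_nonneg _
  have hrank' : (finrank k V : ℝ)
      = finrank k (LinearMap.range φ) + finrank k (LinearMap.ker φ) := by
    exact_mod_cast hrank.symm
  rw [hrank'] at hK hJ hV
  linarith [mul_le_mul_of_nonneg_right hsplit hV]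

end StableSystem

theorem IsStableSystem.exists_eq_smul_one_of_map_le {k V I : Type*} [Field k] [IsAlgClosed k]
    [AddCommGroup V] [Module k V] [FiniteDimensional k V] [Fintype I]
    {Vs : I → Submodule k V} {χ : I → ℝ} (hs : IsStableSystem Vs χ) (hχ : 0 ≤ χ)
    {φ : Module.End k V} (hφ : ∀ i, (Vs i).map φ ≤ Vs i) : ∃ c : k, φ = c • 1 := by
  cases subsingleton_or_nontrivial V
  · exact ⟨0, Subsingleton.elim _ _⟩
  obtain ⟨c, hc⟩ := φ.exists_eigenvalue
  have hψ : ∀ i, (Vs i).map (φ - c • 1) ≤ Vs i := by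
    rintro i _ ⟨x, hx, rfl⟩
    exact sub_mem (hφ i ⟨x, hx, rfl⟩) ((Vs i).smul_mem c hx)
  have hker : LinearMap.ker (φ - c • 1) ≠ ⊥ := by
    rw [← Module.End.eigenspace_def]
    exact Module.End.hasEigenvalue_iff.mp hc
  exact ⟨c, sub_eq_zero.mp <| LinearMap.ker_eq_top.mp <|
    (hs.ker_eq_bot_or_eq_top hχ hψ).resolve_left hker⟩

theorem stmt_10_general {V W : Type*} [AddCommGroup V] [Module ℂ V] [FiniteDimensional ℂ V]
    [AddCommGroup W] [Module ℂ W]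
    {I : Type*} [Fintype I]
    (Vs : I → Submodule ℂ V) (Ws : I → Submodule ℂ W) (χ : I → ℕ)
    (hstabV : ∀ K : Submodule ℂ V, K ≠ ⊥ → K ≠ ⊤ →
      (1 / (finrank ℂ K : ℝ)) * ∑ i, (χ i : ℝ) * finrank ℂ (Vs i ⊓ K : Submodule ℂ V)
        < (1 / (finrank ℂ V : ℝ)) * ∑ i, (χ i : ℝ) * finrank ℂ (Vs i))
    (f : V →ₗ[ℂ] W) (hf : Function.Bijective f) (hfm : ∀ i, (Vs i).map f = Ws i)
    (g : V →ₗ[ℂ] W) (hgm : ∀ i, (Vs i).map g ≤ Ws i) :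
    ∃ c : ℂ, g = c • f := by
  let e := LinearEquiv.ofBijective f hf
  have hstab : IsStableSystem Vs fun i => (χ i : ℝ) := hstabV
  have hφ : ∀ i, (Vs i).map (e.symm ∘ₗ g) ≤ Vs i := fun i =>
    calc (Vs i).map (e.symm ∘ₗ g) = ((Vs i).map g).map (e.symm : W →ₗ[ℂ] V) :=
          Submodule.map_comp _ _ _
      _ ≤ (Ws i).map (e.symm : W →ₗ[ℂ] V) := Submodule.map_mono (hgm i)
      _ = Vs i := (Submodule.map_symm_eq_iff e).mpr (hfm i)
  obtain ⟨c, hc⟩ := hstab.exists_eq_smul_one_of_map_le (fun i => Nat.cast_nonneg _) hφ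
  refine ⟨c, ?_⟩
  calc g = (e : V →ₗ[ℂ] W) ∘ₗ (e.symm ∘ₗ g) := by ext; simp
    _ = c • f := by rw [hc]; ext; simp [e]

/-- If `f` is an isomorphism between two `χ`-stable systems, then any morphism `g` between
them is a scalar multiple of `f`. -/
theorem stmt_10 {V W : Type*} [AddCommGroup V] [Module ℂ V] [FiniteDimensional ℂ V]
    [AddCommGroup W] [Module ℂ W] [FiniteDimensional ℂ W]
    {I : Type*} [Fintype I]
    (Vs : I → Submodule ℂ V) (Ws : I → Submodule ℂ W) (χ : I → ℕ) (χ₀ : ℕ)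
    (htrV : ∑ i, χ i * finrank ℂ (Vs i) = χ₀ * finrank ℂ V)
    (hstabV : ∀ K : Submodule ℂ V, K ≠ ⊥ → K ≠ ⊤ →
      (1 / (finrank ℂ K : ℝ)) * ∑ i, (χ i : ℝ) * finrank ℂ (Vs i ⊓ K : Submodule ℂ V)
        < (1 / (finrank ℂ V : ℝ)) * ∑ i, (χ i : ℝ) * finrank ℂ (Vs i))
    (htrW : ∑ i, χ i * finrank ℂ (Ws i) = χ₀ * finrank ℂ W)
    (hstabW : ∀ K : Submodule ℂ W, K ≠ ⊥ → K ≠ ⊤ →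
      (1 / (finrank ℂ K : ℝ)) * ∑ i, (χ i : ℝ) * finrank ℂ (Ws i ⊓ K : Submodule ℂ W)
        < (1 / (finrank ℂ W : ℝ)) * ∑ i, (χ i : ℝ) * finrank ℂ (Ws i))
    (f : V →ₗ[ℂ] W) (hf : Function.Bijective f) (hfm : ∀ i, (Vs i).map f = Ws i)
    (g : V →ₗ[ℂ] W) (hgm : ∀ i, (Vs i).map g ≤ Ws i) :
    ∃ c : ℂ, g = c • f :=
  stmt_10_general Vs Ws χ hstabV f hf hfm g hgm
end

section
/- For λ ∈ ℂ, consider the quadruple of lines in ℂ² given by V₁ = span(e₁), V₂ = span(e₂), V₃ = span(e₁+e₂), V₄ = span(e₁+λe₂). If λ ∉ {0, 1} then the system (ℂ²; V₁, V₂, V₃, V₄) is indecomposable: there is no decomposition ℂ² = W₁ ⊕ W₂ with both W_j nonzero and V_i = (V_i ∩ W₁) ⊕ (V_i ∩ W₂) for all i. -/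
/-!
A splitting `V = W₁ ⊕ W₂` compatible with a line `K ∙ v` forces `v ∈ W₁` or `v ∈ W₂`.
Already the three lines through `e₁`, `e₂` and `e₁ + e₂` cannot be distributed over two proper
summands: two of these vectors lie in the same summand, and any two of them span `ℂ²`.
-/

open Submodule

section

variable {K V : Type*} [DivisionRing K] [AddCommGroup V] [Module K V]

theorem Submodule.mem_or_mem_of_span_singleton_eq_sup {v : V} {W₁ W₂ : Submodule K V}
    (h : K ∙ v = (K ∙ v ⊓ W₁) ⊔ (K ∙ v ⊓ W₂)) : v ∈ W₁ ∨ v ∈ W₂ := by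
  by_contra! hv
  have hdisj (W : Submodule K V) (hvW : v ∉ W) : K ∙ v ⊓ W = ⊥ :=
    (disjoint_span_singleton.2 fun hv' => absurd hv' hvW).symm.eq_bot
  rw [hdisj W₁ hv.1, hdisj W₂ hv.2, bot_sup_eq, span_singleton_eq_bot] at h
  exact hv.1 (h ▸ W₁.zero_mem)

end

section

variable {R M : Type*} [Ring R] [AddCommGroup M] [Module R M]

theorem Submodule.eq_top_of_two_mem_of_add {x y : M} (hxy : span R {x, y} = ⊤)
    {W : Submodule R M} (h : (x ∈ W ∧ y ∈ W) ∨ (x ∈ W ∧ x + y ∈ W) ∨ (y ∈ W ∧ x + y ∈ W)) :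
    W = ⊤ := by
  have hx_hy : x ∈ W ∧ y ∈ W := by
    rcases h with h | ⟨hx, hs⟩ | ⟨hy, hs⟩
    · exact h
    · exact ⟨hx, by simpa using W.sub_mem hs hx⟩
    · exact ⟨by simpa using W.sub_mem hs hy, hy⟩
  rw [eq_top_iff, ← hxy, span_le]
  simp [Set.insert_subset_iff, hx_hy]

theorem Submodule.not_mem_or_mem_of_isCompl {x y : M} (hxy : span R {x, y} = ⊤)
    {W₁ W₂ : Submodule R M} (hW₁ : W₁ ≠ ⊥) (hW₂ : W₂ ≠ ⊥) (hW : IsCompl W₁ W₂) :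
    ¬ ((x ∈ W₁ ∨ x ∈ W₂) ∧ (y ∈ W₁ ∨ y ∈ W₂) ∧ (x + y ∈ W₁ ∨ x + y ∈ W₂)) := by
  rintro ⟨hx, hy, hs⟩
  have hW₁_top : W₁ ≠ ⊤ := fun h => hW₂ (eq_bot_of_isCompl_top (h ▸ hW).symm)
  have hW₂_top : W₂ ≠ ⊤ := fun h => hW₁ (eq_bot_of_isCompl_top (h ▸ hW))
  rcases hx with hx | hx <;> rcases hy with hy | hy <;> rcases hs with hs | hs <;>
    first
    | exact hW₁_top (eq_top_of_two_mem_of_add hxy (by tauto))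
    | exact hW₂_top (eq_top_of_two_mem_of_add hxy (by tauto))

end

theorem span_pair_single_eq_top (K : Type*) [Semiring K] :
    span K {(![1, 0] : Fin 2 → K), ![0, 1]} = ⊤ := by
  rw [eq_top_iff]
  rintro x -
  have hx : x = x 0 • ![1, 0] + x 1 • ![0, 1] := by
    funext i; fin_cases i <;> simp
  rw [hx]
  exact add_mem (smul_mem _ _ (subset_span (by simp))) (smul_mem _ _ (subset_span (by simp)))

theorem stmt_11_general (lam : ℂ)
    (Vs : Fin 4 → Submodule ℂ (Fin 2 → ℂ))
    (hVs : Vs = ![ℂ ∙ (![1, 0] : Fin 2 → ℂ), ℂ ∙ (![0, 1] : Fin 2 → ℂ),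
      ℂ ∙ (![1, 1] : Fin 2 → ℂ), ℂ ∙ (![1, lam] : Fin 2 → ℂ)]) :
    ¬ ∃ W₁ W₂ : Submodule ℂ (Fin 2 → ℂ), W₁ ≠ ⊥ ∧ W₂ ≠ ⊥ ∧ IsCompl W₁ W₂ ∧
      ∀ i, Vs i = (Vs i ⊓ W₁) ⊔ (Vs i ⊓ W₂) := by
  rintro ⟨W₁, W₂, hW₁, hW₂, hW, hsplit⟩
  subst hVs
  have he : (![1, 0] : Fin 2 → ℂ) + ![0, 1] = ![1, 1] := by
    funext i; fin_cases i <;> simp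
  refine not_mem_or_mem_of_isCompl (span_pair_single_eq_top ℂ) hW₁ hW₂ hW ⟨?_, ?_, he ▸ ?_⟩
  · exact mem_or_mem_of_span_singleton_eq_sup (by simpa using hsplit 0)
  · exact mem_or_mem_of_span_singleton_eq_sup (by simpa using hsplit 1)
  · exact mem_or_mem_of_span_singleton_eq_sup (by simpa using hsplit 2)

/-- For `λ ∉ {0,1}`, the quadruple of lines
`span(e₁), span(e₂), span(e₁+e₂), span(e₁+λe₂)` in ℂ² is indecomposable. -/
theorem stmt_11 (lam : ℂ) (h0 : lam ≠ 0) (h1 : lam ≠ 1)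
    (Vs : Fin 4 → Submodule ℂ (Fin 2 → ℂ))
    (hVs : Vs = ![ℂ ∙ (![1, 0] : Fin 2 → ℂ), ℂ ∙ (![0, 1] : Fin 2 → ℂ),
      ℂ ∙ (![1, 1] : Fin 2 → ℂ), ℂ ∙ (![1, lam] : Fin 2 → ℂ)]) :
    ¬ ∃ W₁ W₂ : Submodule ℂ (Fin 2 → ℂ), W₁ ≠ ⊥ ∧ W₂ ≠ ⊥ ∧ IsCompl W₁ W₂ ∧
      ∀ i, Vs i = (Vs i ⊓ W₁) ⊔ (Vs i ⊓ W₂) :=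
  stmt_11_general lam Vs hVs
end

section
/- Let P and Q be orthogonal projections onto two lines in ℂ² spanned by unit vectors u and v. The pair (ℂ²; ℂu, ℂv) is unitarily equivalent to (ℂ²; ℂu', ℂv') (via a unitary map carrying one pair of lines to the other) if and only if |⟨u, v⟩| = |⟨u', v'⟩|. -/
/-!
Multiplying u and v by unimodular scalars does not change |⟨u, v⟩|, and unitaries preserve inner
products; this gives necessity. Conversely, complete u and u' to orthonormal bases (u, w) and
(u', w'). The coordinates of v and v' in these bases have equal moduli, the second ones because
|⟨w, v⟩|² = 1 - |⟨u, v⟩|². Rescaling u' and w' by unimodular phases makes the coordinates equal, and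
the unitary carrying (u, w) to the rescaled basis sends v to v' and ℂu to ℂu'.
-/

open Module

namespace Submodule

theorem map_span_singleton {R M N : Type*} [Semiring R] [AddCommMonoid M] [AddCommMonoid N]
    [Module R M] [Module R N] (f : M →ₗ[R] N) (x : M) : (R ∙ x).map f = R ∙ f x := by
  rw [map_span, Set.image_singleton]

end Submodule

section

variable {𝕜 E F : Type*} [RCLike 𝕜] [NormedAddCommGroup E] [InnerProductSpace 𝕜 E]
  [NormedAddCommGroup F] [InnerProductSpace 𝕜 F]

local notation "⟪" x ", " y "⟫" => @inner 𝕜 _ _ x y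

theorem RCLike.exists_norm_eq_one_mul_eq {a b : 𝕜} (h : ‖a‖ = ‖b‖) :
    ∃ c : 𝕜, ‖c‖ = 1 ∧ c * a = b := by
  rcases eq_or_ne a 0 with rfl | ha
  · exact ⟨1, by simp, by simpa [eq_comm] using h⟩
  · refine ⟨b / a, ?_, div_mul_cancel₀ b ha⟩
    rw [norm_div, ← h, div_self (norm_ne_zero_iff.2 ha)]

theorem Orthonormal.smul_of_norm_eq_one {ι : Type*} {v : ι → E} (hv : Orthonormal 𝕜 v)
    {c : ι → 𝕜} (hc : ∀ i, ‖c i‖ = 1) : Orthonormal 𝕜 fun i ↦ c i • v i := by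
  classical
  rw [orthonormal_iff_ite] at hv ⊢
  intro i j
  rw [inner_smul_left, inner_smul_right, hv]
  split_ifs with hij
  · subst hij; simp [RCLike.conj_mul, hc]
  · simp

theorem norm_inner_eq_of_span_singleton_eq {x y x' y' : E} (hx : ‖x‖ = ‖x'‖) (hy : ‖y‖ = ‖y'‖)
    (hxx' : 𝕜 ∙ x = 𝕜 ∙ x') (hyy' : 𝕜 ∙ y = 𝕜 ∙ y') : ‖⟪x, y⟫‖ = ‖⟪x', y'⟫‖ := by
  obtain ⟨a, rfl⟩ := Submodule.span_singleton_eq_span_singleton.1 hxx'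
  obtain ⟨b, rfl⟩ := Submodule.span_singleton_eq_span_singleton.1 hyy'
  simp only [Units.smul_def, norm_smul, inner_smul_left, inner_smul_right, norm_mul,
    RCLike.norm_conj] at hx hy ⊢
  rcases eq_or_ne x 0 with rfl | hx0
  · simp
  rcases eq_or_ne y 0 with rfl | hy0
  · simp
  have ha : ‖(a : 𝕜)‖ = 1 := by
    simpa using (mul_eq_right₀ (norm_ne_zero_iff.2 hx0)).1 hx.symm
  have hb : ‖(b : 𝕜)‖ = 1 := by
    simpa using (mul_eq_right₀ (norm_ne_zero_iff.2 hy0)).1 hy.symm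
  rw [ha, hb, one_mul, one_mul]

theorem OrthonormalBasis.exists_linearIsometryEquiv_apply_eq {ι : Type*} [Fintype ι]
    (b : OrthonormalBasis ι 𝕜 E) (b' : OrthonormalBasis ι 𝕜 F) {x : E} {y : F}
    (h : ∀ i, ‖⟪b i, x⟫‖ = ‖⟪b' i, y⟫‖) :
    ∃ g : E ≃ₗᵢ[𝕜] F, (∀ i, ∃ c : 𝕜, ‖c‖ = 1 ∧ g (b i) = c • b' i) ∧ g x = y := by
  have : FiniteDimensional 𝕜 F := b'.toBasis.finiteDimensional_of_finite
  choose c hc hcxy using fun i ↦ RCLike.exists_norm_eq_one_mul_eq (h i)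
  have hon : Orthonormal 𝕜 ((Set.univ : Set ι).domRestrict fun i ↦ c i • b' i) :=
    (b'.orthonormal.smul_of_norm_eq_one hc).comp _ Subtype.val_injective
  obtain ⟨b'', hb''⟩ :=
    hon.exists_orthonormalBasis_extension_of_card_eq (finrank_eq_card_basis b'.toBasis)
  have hb''_apply (i : ι) : b'' i = c i • b' i := hb'' i (Set.mem_univ i)
  refine ⟨b.equiv b'' (.refl ι), fun i ↦ ⟨c i, hc i, by simp [hb''_apply]⟩, ?_⟩
  calc b.equiv b'' (.refl ι) x = ∑ i, ⟪b' i, y⟫ • b' i := by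
        simp only [OrthonormalBasis.equiv_apply, Equiv.refl_apply, b.repr_apply_apply,
          hb''_apply, smul_smul, mul_comm, hcxy]
    _ = y := b'.sum_repr' y

theorem exists_orthonormalBasis_fin_two_apply_zero (hE : finrank 𝕜 E = 2) {u : E} (hu : ‖u‖ = 1) :
    ∃ b : OrthonormalBasis (Fin 2) 𝕜 E, b 0 = u := by
  have hon : Orthonormal 𝕜 (({0} : Set (Fin 2)).domRestrict fun _ ↦ u) := by
    rw [orthonormal_subsingleton_iff]
    exact fun _ ↦ hu
  have : FiniteDimensional 𝕜 E := Module.finite_of_finrank_eq_succ hE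
  obtain ⟨b, hb⟩ := hon.exists_orthonormalBasis_extension_of_card_eq (by simpa using hE)
  exact ⟨b, hb 0 rfl⟩

theorem OrthonormalBasis.sq_norm_inner_one_eq_sub (b : OrthonormalBasis (Fin 2) 𝕜 E) (x : E) :
    ‖⟪b 1, x⟫‖ ^ 2 = ‖x‖ ^ 2 - ‖⟪b 0, x⟫‖ ^ 2 := by
  rw [← b.sum_sq_norm_inner_right, Fin.sum_univ_two]
  ring

theorem exists_linearIsometryEquiv_of_norm_inner_eq (hE : finrank 𝕜 E = 2) {u v u' v' : E}
    (hu : ‖u‖ = 1) (hv : ‖v‖ = 1) (hu' : ‖u'‖ = 1) (hv' : ‖v'‖ = 1)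
    (h : ‖⟪u, v⟫‖ = ‖⟪u', v'⟫‖) : ∃ g : E ≃ₗᵢ[𝕜] E, 𝕜 ∙ g u = 𝕜 ∙ u' ∧ g v = v' := by
  obtain ⟨b, rfl⟩ := exists_orthonormalBasis_fin_two_apply_zero hE hu
  obtain ⟨b', rfl⟩ := exists_orthonormalBasis_fin_two_apply_zero hE hu'
  have h1 : ‖⟪b 1, v⟫‖ = ‖⟪b' 1, v'⟫‖ := by
    rw [← sq_eq_sq₀ (norm_nonneg _) (norm_nonneg _), b.sq_norm_inner_one_eq_sub,
      b'.sq_norm_inner_one_eq_sub, hv, hv', h]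
  obtain ⟨g, hg, hgv⟩ := b.exists_linearIsometryEquiv_apply_eq b' (x := v) (y := v') <| by
    intro i; fin_cases i
    exacts [h, h1]
  obtain ⟨c, hc, hgu⟩ := hg 0
  refine ⟨g, ?_, hgv⟩
  rw [hgu, Submodule.span_singleton_smul_eq (norm_ne_zero_iff.1 (hc.trans_ne one_ne_zero)).isUnit]

theorem exists_linearIsometryEquiv_map_span_singleton_iff (hE : finrank 𝕜 E = 2) {u v u' v' : E}
    (hu : ‖u‖ = 1) (hv : ‖v‖ = 1) (hu' : ‖u'‖ = 1) (hv' : ‖v'‖ = 1) :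
    (∃ g : E ≃ₗᵢ[𝕜] E, (𝕜 ∙ u).map (g.toLinearEquiv : E →ₗ[𝕜] E) = (𝕜 ∙ u') ∧
        (𝕜 ∙ v).map (g.toLinearEquiv : E →ₗ[𝕜] E) = (𝕜 ∙ v')) ↔
      ‖⟪u, v⟫‖ = ‖⟪u', v'⟫‖ := by
  simp only [Submodule.map_span_singleton, LinearEquiv.coe_coe,
    LinearIsometryEquiv.coe_toLinearEquiv]
  constructor
  · rintro ⟨g, hgu, hgv⟩
    rw [← g.inner_map_map]
    exact norm_inner_eq_of_span_singleton_eq (by rw [g.norm_map, hu, hu'])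
      (by rw [g.norm_map, hv, hv']) hgu hgv
  · intro h
    obtain ⟨g, hgu, hgv⟩ := exists_linearIsometryEquiv_of_norm_inner_eq hE hu hv hu' hv' h
    exact ⟨g, hgu, by rw [hgv]⟩

end

/-- Two pairs of lines in ℂ² spanned by unit vectors are unitarily equivalent iff the
absolute values of the inner products of the spanning unit vectors agree. -/
theorem stmt_14 (u v u' v' : EuclideanSpace ℂ (Fin 2))
    (hu : ‖u‖ = 1) (hv : ‖v‖ = 1) (hu' : ‖u'‖ = 1) (hv' : ‖v'‖ = 1) :
    (∃ g : EuclideanSpace ℂ (Fin 2) ≃ₗᵢ[ℂ] EuclideanSpace ℂ (Fin 2),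
        (ℂ ∙ u).map (g.toLinearEquiv : EuclideanSpace ℂ (Fin 2) →ₗ[ℂ] EuclideanSpace ℂ (Fin 2)) = (ℂ ∙ u') ∧
        (ℂ ∙ v).map (g.toLinearEquiv : EuclideanSpace ℂ (Fin 2) →ₗ[ℂ] EuclideanSpace ℂ (Fin 2)) = (ℂ ∙ v')) ↔
      ‖(inner ℂ u v : ℂ)‖ = ‖(inner ℂ u' v' : ℂ)‖ :=
  exists_linearIsometryEquiv_map_span_singleton_iff finrank_euclideanSpace_fin hu hv hu' hv'
end
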